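/- For the convex generator f(u) = (√u − 1)²/2, the squared Hellinger divergence between two Poincaré distributions p_θ and p_{θ′} (θ, θ′ real 2×2 symmetric positive-definite) equals 1 − 2·(det θ)^{1/4}·(det θ′)^{1/4}·exp((det θ)^{1/2} + (det θ′)^{1/2}) / ( (det(θ+θ′))^{1/2} · exp((det(θ+θ′))^{1/2}) ). -/

import Mathlib

open MeasureTheory Matrix

/-- The Poincaré density on the upper half-plane, as a density on `ℝ × ℝ`
(vanishing for `y ≤ 0`), indexed by a 2×2 symmetric positive-definite matrix. -/
noncomputable def poincareDensity (θ : Matrix (Fin 2) (Fin 2) ℝ) (z : ℝ × ℝ) : ℝ :=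
  if 0 < z.2 then
    Real.sqrt θ.det * Real.exp (2 * Real.sqrt θ.det) / Real.pi *
      Real.exp (-(θ 0 0 * (z.1 ^ 2 + z.2 ^ 2) + 2 * θ 0 1 * z.1 + θ 1 1) / z.2) / z.2 ^ 2
  else 0

/-- The `f`-divergence between two densities on the upper half-plane. -/
noncomputable def fDivH (f : ℝ → ℝ) (p q : ℝ × ℝ → ℝ) : ℝ :=
  ∫ z in {w : ℝ × ℝ | 0 < w.2}, p z * f (q z / p z)

/-!
The exponent of `p_θ` is linear in `θ`, so on the upper half-plane `√(p_θ p_θ')` is a constant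
multiple of the unnormalised density `k_m` of `m = (θ + θ') / 2`, and the Hellinger divergence
reduces to the normalising constant `∫ k_θ = π e^{-2√det θ} / √det θ`. That constant is a
Gaussian integral in `x` followed by `∫₀^∞ y^{-3/2} e^{-(p y + q / y)} dy`, which the
substitution `y = q / u²` turns into the Cauchy–Schlömilch integral
`∫₀^∞ e^{-(u - c / u)²} du = √π / 2`.
-/

open Real Set

section ChangeOfVariables

variable {E : Type*} [NormedAddCommGroup E] [NormedSpace ℝ E]

lemma hasDerivAt_const_div_pow (c : ℝ) {n : ℕ} (hn : n ≠ 0) {u : ℝ} (hu : u ≠ 0) :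
    HasDerivAt (fun u : ℝ => c / u ^ n) (-(n * c / u ^ (n + 1))) u := by
  have h := ((hasDerivAt_pow n u).inv (pow_ne_zero n hu)).const_mul c
  have hval : c * (-(n * u ^ (n - 1)) / (u ^ n) ^ 2) = -(n * c / u ^ (n + 1)) := by
    obtain ⟨m, rfl⟩ := Nat.exists_eq_add_one_of_ne_zero hn
    rw [Nat.add_sub_cancel]
    field_simp
    ring
  rw [hval] at h
  simpa only [div_eq_mul_inv, Pi.inv_apply] using h

lemma injOn_const_div_pow {c : ℝ} (hc : c ≠ 0) {n : ℕ} (hn : n ≠ 0) :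
    InjOn (fun u : ℝ => c / u ^ n) (Ioi 0) := by
  intro u hu v hv huv
  have hpow : u ^ n = v ^ n := by
    simpa [div_eq_mul_inv, hc] using huv
  exact (pow_left_inj₀ (le_of_lt hu) (le_of_lt hv) hn).1 hpow

lemma image_const_div_pow_Ioi {c : ℝ} (hc : 0 < c) {n : ℕ} (hn : n ≠ 0) :
    (fun u : ℝ => c / u ^ n) '' Ioi 0 = Ioi 0 := by
  refine Subset.antisymm ?_ fun y (hy : 0 < y) => ?_
  · rintro _ ⟨u, hu : 0 < u, rfl⟩
    exact div_pos hc (pow_pos hu n)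
  · refine ⟨(c / y) ^ ((n : ℝ)⁻¹), rpow_pos_of_pos (div_pos hc hy) _, ?_⟩
    simp only
    rw [rpow_inv_natCast_pow (by positivity) hn]
    field_simp

lemma abs_neg_const_div_pow_of_pos {c : ℝ} (hc : 0 < c) {n : ℕ} (hn : n ≠ 0) {u : ℝ}
    (hu : 0 < u) :
    |-(n * c / u ^ (n + 1))| = n * c / u ^ (n + 1) := by
  rw [abs_neg, abs_of_pos]
  have : (0 : ℝ) < n := Nat.cast_pos.2 (Nat.pos_of_ne_zero hn)
  positivity

lemma integral_Ioi_comp_const_div_pow {c : ℝ} (hc : 0 < c) {n : ℕ} (hn : n ≠ 0)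
    (g : ℝ → E) :
    ∫ u in Ioi 0, (n * c / u ^ (n + 1)) • g (c / u ^ n) = ∫ y in Ioi 0, g y := by
  have h := integral_image_eq_integral_abs_deriv_smul measurableSet_Ioi
    (fun u (hu : u ∈ Ioi 0) => (hasDerivAt_const_div_pow c hn (ne_of_gt hu)).hasDerivWithinAt)
    (injOn_const_div_pow hc.ne' hn) g
  rw [image_const_div_pow_Ioi hc hn] at h
  rw [h]
  exact setIntegral_congr_fun measurableSet_Ioi fun u hu => by
    rw [abs_neg_const_div_pow_of_pos hc hn hu]

lemma integrableOn_Ioi_comp_const_div_pow_iff {c : ℝ} (hc : 0 < c) {n : ℕ} (hn : n ≠ 0)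
    (g : ℝ → E) :
    IntegrableOn (fun u => (n * c / u ^ (n + 1)) • g (c / u ^ n)) (Ioi 0) ↔
      IntegrableOn g (Ioi 0) := by
  have h := integrableOn_image_iff_integrableOn_abs_deriv_smul measurableSet_Ioi
    (fun u (hu : u ∈ Ioi 0) => (hasDerivAt_const_div_pow c hn (ne_of_gt hu)).hasDerivWithinAt)
    (injOn_const_div_pow hc.ne' hn) g
  rw [image_const_div_pow_Ioi hc hn] at h
  rw [h]
  exact integrableOn_congr_fun (fun u hu => by
    simp only [abs_neg_const_div_pow_of_pos hc hn hu]) measurableSet_Ioi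

end ChangeOfVariables

lemma strictMonoOn_sub_const_div {c : ℝ} (hc : 0 ≤ c) :
    StrictMonoOn (fun u : ℝ => u - c / u) (Ioi 0) := by
  intro u (hu : 0 < u) v _ huv
  have : c / v ≤ c / u := div_le_div_of_nonneg_left hc hu huv.le
  simp only
  linarith

lemma image_sub_const_div_Ioi {c : ℝ} (hc : 0 < c) :
    (fun u : ℝ => u - c / u) '' Ioi 0 = univ := by
  refine eq_univ_of_forall fun v => ?_
  -- the positive root of `u ^ 2 - v * u - c`
  set u := (v + √(v ^ 2 + 4 * c)) / 2
  have hsq : √(v ^ 2 + 4 * c) ^ 2 = v ^ 2 + 4 * c := sq_sqrt (by positivity)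
  have hlt : |v| < √(v ^ 2 + 4 * c) := by
    rw [← sqrt_sq_eq_abs]
    exact sqrt_lt_sqrt (sq_nonneg v) (by linarith)
  have hu : 0 < u := by
    have := neg_abs_le v
    simp only [u]
    linarith
  refine ⟨u, hu, ?_⟩
  simp only
  field_simp
  simp only [u]
  linear_combination hsq / 4

lemma integrableOn_exp_neg_sq_sub_const_div (c : ℝ) :
    IntegrableOn (fun u => exp (-(u - c / u) ^ 2)) (Ioi 0) := by
  have hgauss : Integrable fun u : ℝ => exp (2 * c) * exp (-u ^ 2) := by
    simpa using (integrable_exp_neg_mul_sq one_pos).const_mul (exp (2 * c))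
  refine hgauss.integrableOn.mono' (by fun_prop) (ae_restrict_of_forall_mem measurableSet_Ioi ?_)
  intro u (hu : 0 < u)
  rw [norm_of_nonneg (exp_pos _).le, ← exp_add, exp_le_exp]
  have : (u - c / u) ^ 2 = u ^ 2 - 2 * c + (c / u) ^ 2 := by
    field_simp
    ring
  nlinarith [sq_nonneg (c / u)]

/-- `u - c / u` maps `(0, ∞)` onto `ℝ` with Jacobian `1 + c / u ^ 2`, and the reflection
`u ↦ c / u` shows that the two summands of the Jacobian contribute equally. -/
lemma integral_exp_neg_sq_sub_const_div {c : ℝ} (hc : 0 < c) :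
    ∫ u in Ioi 0, exp (-(u - c / u) ^ 2) = √π / 2 := by
  set G : ℝ → ℝ := fun u => exp (-(u - c / u) ^ 2)
  have hderiv : ∀ u ∈ Ioi (0 : ℝ),
      HasDerivWithinAt (fun u => u - c / u) (1 + c / u ^ 2) (Ioi 0) u := fun u hu => by
    simpa using ((hasDerivAt_id' u).fun_sub
      (hasDerivAt_const_div_pow c one_ne_zero (ne_of_gt hu))).hasDerivWithinAt
  have hinj := (strictMonoOn_sub_const_div hc.le).injOn
  have hjac : ∀ u ∈ Ioi (0 : ℝ), |1 + c / u ^ 2| • exp (-(u - c / u) ^ 2) =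
      G u + c / u ^ 2 * G u := fun u _ => by
    rw [abs_of_pos (by positivity), smul_eq_mul, add_mul, one_mul]
  have hsubst := integral_image_eq_integral_abs_deriv_smul measurableSet_Ioi hderiv hinj
    fun v => exp (-v ^ 2)
  have hint := (integrableOn_image_iff_integrableOn_abs_deriv_smul measurableSet_Ioi hderiv hinj
    fun v => exp (-v ^ 2)).1
  rw [image_sub_const_div_Ioi hc] at hsubst hint
  rw [Measure.restrict_univ] at hsubst
  rw [integrableOn_univ] at hint
  replace hint := integrableOn_congr_fun hjac measurableSet_Ioi |>.1
    (hint (by simpa using integrable_exp_neg_mul_sq one_pos))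
  have hG := integrableOn_exp_neg_sq_sub_const_div c
  have hreflect : ∫ u in Ioi 0, c / u ^ 2 * G u = ∫ u in Ioi 0, G u := by
    rw [← integral_Ioi_comp_const_div_pow hc one_ne_zero G]
    refine setIntegral_congr_fun measurableSet_Ioi fun u (hu : 0 < u) => ?_
    simp only [G, smul_eq_mul, Nat.cast_one, one_mul, pow_one]
    congr 3
    field_simp
    ring
  have hgauss : ∫ v, exp (-v ^ 2) = √π := by simpa using integral_gaussian 1
  have hcG : IntegrableOn (fun u => c / u ^ 2 * G u) (Ioi 0) := by
    refine (hint.sub hG).congr_fun (fun u _ => ?_) measurableSet_Ioi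
    simp [G]
  rw [setIntegral_congr_fun measurableSet_Ioi hjac, integral_add hG hcG,
    hreflect] at hsubst
  linarith

section BesselHalf

variable {p q : ℝ}

lemma smul_sqrt_div_sq_mul_exp_const_div_sq (hp : 0 < p) (hq : 0 < q) {u : ℝ} (hu : 0 < u) :
    ((2 : ℕ) * q / u ^ (2 + 1)) • (√(q / u ^ 2) / (q / u ^ 2) ^ 2 *
        exp (-(p * (q / u ^ 2) + q / (q / u ^ 2)))) =
      2 / √q * exp (-2 * √(p * q)) * exp (-(u - √(p * q) / u) ^ 2) := by
  have hsq : √(p * q) ^ 2 = p * q := sq_sqrt (by positivity)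
  have hsqq : √q ^ 2 = q := sq_sqrt hq.le
  have hexp :
      -(p * (q / u ^ 2) + q / (q / u ^ 2)) = -2 * √(p * q) + -(u - √(p * q) / u) ^ 2 := by
    field_simp
    linear_combination hsq
  rw [hexp, exp_add, sqrt_div hq.le, sqrt_sq hu.le, smul_eq_mul]
  have : 0 < √q := sqrt_pos.2 hq
  field_simp
  linear_combination 2 * u ^ 3 * hsqq

lemma integrableOn_sqrt_div_sq_mul_exp (hp : 0 < p) (hq : 0 < q) :
    IntegrableOn (fun y => √y / y ^ 2 * exp (-(p * y + q / y))) (Ioi 0) := by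
  rw [← integrableOn_Ioi_comp_const_div_pow_iff hq two_ne_zero]
  refine IntegrableOn.congr_fun ?_
    (fun u hu => (smul_sqrt_div_sq_mul_exp_const_div_sq hp hq hu).symm) measurableSet_Ioi
  exact (integrableOn_exp_neg_sq_sub_const_div _).const_mul _

lemma integral_sqrt_div_sq_mul_exp (hp : 0 < p) (hq : 0 < q) :
    ∫ y in Ioi 0, √y / y ^ 2 * exp (-(p * y + q / y)) =
      √(π / q) * exp (-2 * √(p * q)) := by
  rw [← integral_Ioi_comp_const_div_pow hq two_ne_zero,
    setIntegral_congr_fun measurableSet_Ioi fun u hu =>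
      smul_sqrt_div_sq_mul_exp_const_div_sq hp hq hu,
    integral_const_mul, integral_exp_neg_sq_sub_const_div (sqrt_pos.2 (mul_pos hp hq)),
    sqrt_div pi_pos.le]
  ring

end BesselHalf

section PoincareKernel

variable {θ : Matrix (Fin 2) (Fin 2) ℝ}

noncomputable def poincareKernel (θ : Matrix (Fin 2) (Fin 2) ℝ) (z : ℝ × ℝ) : ℝ :=
  exp (-(θ 0 0 * (z.1 ^ 2 + z.2 ^ 2) + 2 * θ 0 1 * z.1 + θ 1 1) / z.2) / z.2 ^ 2

lemma poincareKernel_nonneg (θ : Matrix (Fin 2) (Fin 2) ℝ) (z : ℝ × ℝ) :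
    0 ≤ poincareKernel θ z := by
  unfold poincareKernel
  positivity

lemma poincareKernel_mul_poincareKernel (θ θ' : Matrix (Fin 2) (Fin 2) ℝ) (z : ℝ × ℝ) :
    poincareKernel θ z * poincareKernel θ' z =
      poincareKernel ((2 : ℝ)⁻¹ • (θ + θ')) z ^ 2 := by
  simp only [poincareKernel, Matrix.smul_apply, Matrix.add_apply, smul_eq_mul]
  rw [div_mul_div_comm, div_pow, sq (exp _), ← exp_add, ← exp_add]
  ring_nf

lemma poincareKernel_eq_gaussian_mul (hθ : θ.PosDef) {y : ℝ} (hy : 0 < y) (x : ℝ) :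
    poincareKernel θ (x, y) = exp (-(θ 0 0 / y) * (x + θ 0 1 / θ 0 0) ^ 2) *
      (exp (-(θ 0 0 * y + θ.det / θ 0 0 / y)) / y ^ 2) := by
  have hsymm : θ 1 0 = θ 0 1 := by simpa using hθ.isHermitian.apply 0 1
  have ha : θ 0 0 ≠ 0 := hθ.diag_pos.ne'
  rw [poincareKernel, ← mul_div_assoc, ← exp_add, det_fin_two, hsymm]
  congr 2
  field_simp
  ring

lemma integrable_poincareKernel_fiber (hθ : θ.PosDef) {y : ℝ} (hy : 0 < y) :
    Integrable fun x => poincareKernel θ (x, y) := by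
  simp_rw [poincareKernel_eq_gaussian_mul hθ hy]
  exact ((integrable_exp_neg_mul_sq (div_pos hθ.diag_pos hy)).comp_add_right _).mul_const _

lemma integral_poincareKernel_fiber (hθ : θ.PosDef) {y : ℝ} (hy : 0 < y) :
    ∫ x, poincareKernel θ (x, y) =
      √(π / θ 0 0) * (√y / y ^ 2 * exp (-(θ 0 0 * y + θ.det / θ 0 0 / y))) := by
  simp_rw [poincareKernel_eq_gaussian_mul hθ hy]
  rw [integral_mul_const, integral_add_right_eq_self (fun x => exp (-(θ 0 0 / y) * x ^ 2)),
    integral_gaussian, show π / (θ 0 0 / y) = π / θ 0 0 * y by field_simp,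
    sqrt_mul (div_nonneg pi_pos.le hθ.diag_pos.le)]
  ring

lemma measurableSet_snd_pos : MeasurableSet {z : ℝ × ℝ | 0 < z.2} :=
  measurableSet_lt measurable_const measurable_snd

lemma volume_restrict_snd_pos :
    (volume : Measure (ℝ × ℝ)).restrict {z | 0 < z.2} =
      (volume : Measure ℝ).prod (volume.restrict (Ioi 0)) := by
  rw [show {z : ℝ × ℝ | 0 < z.2} = univ ×ˢ Ioi 0 by ext; simp, Measure.volume_eq_prod,
    ← Measure.prod_restrict, Measure.restrict_univ]

lemma integrableOn_poincareKernel (hθ : θ.PosDef) :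
    IntegrableOn (poincareKernel θ) {z | 0 < z.2} := by
  rw [IntegrableOn, volume_restrict_snd_pos,
    integrable_prod_iff'
    (by unfold poincareKernel; fun_prop : Measurable (poincareKernel θ)).aestronglyMeasurable]
  refine ⟨ae_restrict_of_forall_mem measurableSet_Ioi fun y hy =>
    integrable_poincareKernel_fiber hθ hy, ?_⟩
  have ha : 0 < θ 0 0 := hθ.diag_pos
  refine IntegrableOn.congr_fun ((integrableOn_sqrt_div_sq_mul_exp ha
      (div_pos hθ.det_pos ha)).const_mul (√(π / θ 0 0))) (fun y (hy : 0 < y) => ?_)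
    measurableSet_Ioi
  simp only [norm_of_nonneg (poincareKernel_nonneg _ _), integral_poincareKernel_fiber hθ hy]

lemma integral_poincareKernel (hθ : θ.PosDef) :
    ∫ z in {z | 0 < z.2}, poincareKernel θ z = π / √θ.det * exp (-2 * √θ.det) := by
  have ha : 0 < θ 0 0 := hθ.diag_pos
  have hint := integrableOn_poincareKernel hθ
  rw [IntegrableOn, volume_restrict_snd_pos] at hint
  rw [volume_restrict_snd_pos, integral_prod_symm _ hint,
    setIntegral_congr_fun measurableSet_Ioi fun y hy => integral_poincareKernel_fiber hθ hy,
    integral_const_mul, integral_sqrt_div_sq_mul_exp ha (div_pos hθ.det_pos ha),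
    mul_div_cancel₀ _ ha.ne', ← mul_assoc, ← sqrt_mul (div_nonneg pi_pos.le ha.le),
    show π / θ 0 0 * (π / (θ.det / θ 0 0)) = π ^ 2 / θ.det by
      field_simp [ha.ne', hθ.det_pos.ne'],
    sqrt_div (sq_nonneg π), sqrt_sq pi_pos.le]

end PoincareKernel

section PoincareDensity

variable {θ θ' : Matrix (Fin 2) (Fin 2) ℝ} {z : ℝ × ℝ}

lemma poincareDensity_of_pos (θ : Matrix (Fin 2) (Fin 2) ℝ) (hz : 0 < z.2) :
    poincareDensity θ z = √θ.det * exp (2 * √θ.det) / π * poincareKernel θ z := by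
  rw [poincareDensity, if_pos hz, poincareKernel, mul_div_assoc]

lemma poincareDensity_pos (hθ : θ.PosDef) (hz : 0 < z.2) : 0 < poincareDensity θ z := by
  have : 0 < √θ.det := sqrt_pos.2 hθ.det_pos
  rw [poincareDensity_of_pos θ hz, poincareKernel]
  positivity

lemma integrableOn_poincareDensity (hθ : θ.PosDef) :
    IntegrableOn (poincareDensity θ) {z | 0 < z.2} :=
  IntegrableOn.congr_fun ((integrableOn_poincareKernel hθ).const_mul _)
    (fun _ hz => (poincareDensity_of_pos θ hz).symm) measurableSet_snd_pos

lemma integral_poincareDensity (hθ : θ.PosDef) :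
    ∫ z in {z | 0 < z.2}, poincareDensity θ z = 1 := by
  have : 0 < √θ.det := sqrt_pos.2 hθ.det_pos
  rw [setIntegral_congr_fun measurableSet_snd_pos
      fun z (hz : 0 < z.2) => poincareDensity_of_pos θ hz,
    integral_const_mul, integral_poincareKernel hθ,
    neg_mul, Real.exp_neg]
  field_simp

lemma integral_sqrt_mul_poincareDensity (hθ : θ.PosDef) (hθ' : θ'.PosDef) :
    ∫ z in {z | 0 < z.2}, √(poincareDensity θ z * poincareDensity θ' z) =
      2 * √(√θ.det * √θ'.det) * exp (√θ.det + √θ'.det) /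
        (√(θ + θ').det * exp √(θ + θ').det) := by
  set s := √θ.det
  set s' := √θ'.det
  have hs : 0 < s := sqrt_pos.2 hθ.det_pos
  have hs' : 0 < s' := sqrt_pos.2 hθ'.det_pos
  have hmean : ((2 : ℝ)⁻¹ • (θ + θ')).PosDef := (hθ.add hθ').smul (by norm_num)
  have hdet : √((2 : ℝ)⁻¹ • (θ + θ')).det = √(θ + θ').det / 2 := by
    rw [det_smul, Fintype.card_fin, sqrt_mul (by positivity), inv_pow, sqrt_inv,
      sqrt_sq zero_le_two]
    ring
  have hconst : s * exp (2 * s) / π * (s' * exp (2 * s') / π) =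
      (√(s * s') * exp (s + s') / π) ^ 2 := by
    have hexp : exp (s + s') ^ 2 = exp (2 * s) * exp (2 * s') := by
      rw [sq, ← exp_add, ← exp_add]
      ring_nf
    rw [div_pow, mul_pow, sq_sqrt (by positivity), hexp]
    ring
  have hpt : ∀ z ∈ {z : ℝ × ℝ | 0 < z.2},
      √(poincareDensity θ z * poincareDensity θ' z) =
        √(s * s') * exp (s + s') / π * poincareKernel ((2 : ℝ)⁻¹ • (θ + θ')) z := by
    intro z (hz : 0 < z.2)
    rw [poincareDensity_of_pos θ hz, poincareDensity_of_pos θ' hz, mul_mul_mul_comm, hconst,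
      poincareKernel_mul_poincareKernel, ← mul_pow, sqrt_sq]
    exact mul_nonneg (by positivity) (poincareKernel_nonneg _ _)
  rw [setIntegral_congr_fun measurableSet_snd_pos hpt,
    integral_const_mul, integral_poincareKernel hmean, hdet]
  have : 0 < √(θ + θ').det := sqrt_pos.2 (hθ.add hθ').det_pos
  rw [show -2 * (√(θ + θ').det / 2) = -√(θ + θ').det by ring, Real.exp_neg]
  field_simp

end PoincareDensity

lemma mul_sqrt_div_sub_one_sq_div_two {p q : ℝ} (hp : 0 < p) (hq : 0 ≤ q) :
    p * ((√(q / p) - 1) ^ 2 / 2) = p / 2 + q / 2 - √(p * q) := by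
  have hsq : p * √(q / p) ^ 2 = q := by
    rw [sq_sqrt (div_nonneg hq hp.le)]
    field_simp
  have hmul : p * √(q / p) = √(p * q) := by
    rw [← sqrt_sq hp.le, ← sqrt_mul (sq_nonneg p), sqrt_sq hp.le]
    congr 1
    field_simp
  linear_combination hsq / 2 - hmul

lemma fDivH_hellinger_eq {p q : ℝ × ℝ → ℝ} (hp : IntegrableOn p {z | 0 < z.2})
    (hq : IntegrableOn q {z | 0 < z.2}) (hp_pos : ∀ z ∈ {z : ℝ × ℝ | 0 < z.2}, 0 < p z)
    (hq_nonneg : ∀ z ∈ {z : ℝ × ℝ | 0 < z.2}, 0 ≤ q z)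
    (hp_one : ∫ z in {z | 0 < z.2}, p z = 1)
    (hq_one : ∫ z in {z | 0 < z.2}, q z = 1) :
    fDivH (fun u => (√u - 1) ^ 2 / 2) p q = 1 - ∫ z in {z | 0 < z.2}, √(p z * q z) := by
  have hsqrt : IntegrableOn (fun z => √(p z * q z)) {z | 0 < z.2} := by
    refine ((hp.add hq).div_const 2).mono' (continuous_sqrt.comp_aestronglyMeasurable
      (hp.aestronglyMeasurable.mul hq.aestronglyMeasurable)) ?_
    refine ae_restrict_of_forall_mem measurableSet_snd_pos fun z hz => ?_
    -- AM–GM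
    rw [Pi.add_apply, norm_of_nonneg (sqrt_nonneg _), sqrt_le_iff]
    constructor
    · linarith [hp_pos z hz, hq_nonneg z hz]
    · nlinarith [sq_nonneg (p z - q z)]
  have hmean : IntegrableOn (fun z => p z / 2 + q z / 2) {z | 0 < z.2} :=
    (hp.div_const 2).add (hq.div_const 2)
  rw [fDivH, setIntegral_congr_fun measurableSet_snd_pos fun z hz =>
      mul_sqrt_div_sub_one_sq_div_two (hp_pos z hz) (hq_nonneg z hz),
    integral_sub hmean hsqrt,
    integral_add (hp.div_const 2) (hq.div_const 2), integral_div, integral_div, hp_one, hq_one]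
  ring

/-- closed form of the squared Hellinger divergence
(f(u) = (√u − 1)²/2) between two Poincaré distributions. -/
theorem hellinger_poincare (θ θ' : Matrix (Fin 2) (Fin 2) ℝ)
    (hθ : θ.PosDef) (hθ' : θ'.PosDef) :
    fDivH (fun u => (Real.sqrt u - 1) ^ 2 / 2) (poincareDensity θ) (poincareDensity θ') =
      1 - 2 * θ.det ^ ((1 : ℝ) / 4) * θ'.det ^ ((1 : ℝ) / 4) *
          Real.exp (θ.det ^ ((1 : ℝ) / 2) + θ'.det ^ ((1 : ℝ) / 2)) /
        ((θ + θ').det ^ ((1 : ℝ) / 2) * Real.exp ((θ + θ').det ^ ((1 : ℝ) / 2))) := by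
  have hquarter : ∀ x : ℝ, 0 ≤ x → x ^ ((1 : ℝ) / 4) = √√x := fun x hx => by
    rw [sqrt_eq_rpow, sqrt_eq_rpow, ← rpow_mul hx]
    norm_num
  rw [fDivH_hellinger_eq (integrableOn_poincareDensity hθ) (integrableOn_poincareDensity hθ')
      (fun _ => poincareDensity_pos hθ) (fun _ hz => (poincareDensity_pos hθ' hz).le)
      (integral_poincareDensity hθ) (integral_poincareDensity hθ'),
    integral_sqrt_mul_poincareDensity hθ hθ', hquarter _ hθ.det_pos.le,
    hquarter _ hθ'.det_pos.le, ← sqrt_eq_rpow, ← sqrt_eq_rpow, ← sqrt_eq_rpow,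
    sqrt_mul (sqrt_nonneg _)]
  ring
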